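/- arXiv:1910.11477 — 2 statements merged into one kernel-verified Lean document; each statement's English description precedes it below -/
import Mathlib

section
/- Let $g_1, g_2$ be jointly Gaussian random variables with mean zero, unit variances, and correlation $\rho \in [-1, 1]$. Then for all $t > 0$, $\mathbb{P}(g_1 g_2 > t) \ge \frac{2}{\pi} \cos^{-1}\left(\frac{\sqrt{3 - \rho}}{2}\right) \exp\left(-\frac{2t}{1 + \rho}\right)$. -/
/-!
With `a = (1 + ρ) / 2` one has `g₁ g₂ = a w₁² - (1 - a) w₂² = a r² - r² sin² θ` in polar coordinates
`(r, θ)` of `(w₁, w₂)`. On the event `r² > 2t / a`, `sin² θ ≤ a / 2` this exceeds `t`. For the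
standard planar Gaussian, `r` and `θ` are independent with `ℙ(r > R) = exp (-R² / 2)` and `θ`
uniform on `(-π, π)`, and `|sin θ| ≤ c` on a set of angles of length at least `4 arcsin c`.
Finally `arccos (√(3 - ρ) / 2) = arcsin √(a / 2)`.
-/

open MeasureTheory ProbabilityTheory Real Set Filter

lemma IndepFun.measure_preimage_prodMk {Ω α β : Type*} [MeasurableSpace Ω] [MeasurableSpace α]
    [MeasurableSpace β] {μ : Measure Ω} [IsFiniteMeasure μ] {X : Ω → α} {Y : Ω → β}
    (hX : Measurable X) (hY : Measurable Y) (h : IndepFun X Y μ) {s : Set (α × β)}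
    (hs : MeasurableSet s) :
    μ ((fun ω => (X ω, Y ω)) ⁻¹' s) = ((μ.map X).prod (μ.map Y)) s := by
  rw [← Measure.map_apply (hX.prodMk hY) hs,
    (indepFun_iff_map_prod_eq_prod_map_map hX.aemeasurable hY.aemeasurable).mp h]

lemma gaussianReal_prod_eq_withDensity (m₁ m₂ : ℝ) {v₁ v₂ : NNReal} (hv₁ : v₁ ≠ 0)
    (hv₂ : v₂ ≠ 0) :
    (gaussianReal m₁ v₁).prod (gaussianReal m₂ v₂)
      = volume.withDensity fun p => gaussianPDF m₁ v₁ p.1 * gaussianPDF m₂ v₂ p.2 := by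
  rw [gaussianReal_of_var_ne_zero _ hv₁, gaussianReal_of_var_ne_zero _ hv₂,
    prod_withDensity (measurable_gaussianPDF _ _) (measurable_gaussianPDF _ _),
    Measure.volume_eq_prod]

lemma gaussianPDFReal_zero_one_mul (x y : ℝ) :
    gaussianPDFReal 0 1 x * gaussianPDFReal 0 1 y = (2 * π)⁻¹ * exp (-((x ^ 2 + y ^ 2) / 2)) := by
  simp only [gaussianPDFReal, NNReal.coe_one, mul_one, sub_zero]
  rw [mul_mul_mul_comm, ← mul_inv, mul_self_sqrt (by positivity), ← exp_add]
  ring_nf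

lemma integral_Ioi_mul_exp_neg_sq_div_two (R : ℝ) :
    ∫ r in Ioi R, r * exp (-(r ^ 2 / 2)) = exp (-(R ^ 2 / 2)) := by
  have hderiv (x : ℝ) : HasDerivAt (fun r => -exp (-(r ^ 2 / 2))) (x * exp (-(x ^ 2 / 2))) x := by
    have : HasDerivAt (fun r : ℝ => -(r ^ 2 / 2)) (-x) x := by
      simpa using ((hasDerivAt_pow 2 x).div_const 2).fun_neg
    simpa [mul_comm] using this.exp.fun_neg
  have hint : IntegrableOn (fun r => r * exp (-(r ^ 2 / 2))) (Ioi R) := by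
    have := integrable_mul_exp_neg_mul_sq (by norm_num : (0 : ℝ) < 1 / 2)
    exact this.integrableOn.congr_fun (fun x _ => by ring_nf) measurableSet_Ioi
  have hlim : Tendsto (fun r : ℝ => -exp (-(r ^ 2 / 2))) atTop (nhds 0) := by
    have h : Tendsto (fun r : ℝ => r ^ 2 / 2) atTop atTop :=
      (tendsto_pow_atTop two_ne_zero).atTop_div_const (by norm_num)
    simpa using (tendsto_exp_atBot.comp (tendsto_neg_atTop_atBot.comp h)).neg
  simpa using integral_Ioi_of_hasDerivAt_of_tendsto' (fun x _ => hderiv x) hint hlim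

lemma gaussianReal_prod_real_of_polar {A : Set (ℝ × ℝ)} (hA : MeasurableSet A) {R : ℝ}
    (hR : 0 ≤ R) {T : Set ℝ} (hT : MeasurableSet T)
    (hAT : ∀ r θ, 0 < r → (polarCoord.symm (r, θ) ∈ A ↔ R < r ∧ θ ∈ T)) :
    ((gaussianReal 0 1).prod (gaussianReal 0 1)).real A
      = (2 * π)⁻¹ * exp (-(R ^ 2 / 2)) * volume.real (Ioo (-π) π ∩ T) := by
  set F : ℝ × ℝ → ℝ := fun p => gaussianPDFReal 0 1 p.1 * gaussianPDFReal 0 1 p.2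
  set G : ℝ → ℝ := (Ioi R).indicator fun r => (2 * π)⁻¹ * (r * exp (-(r ^ 2 / 2)))
  have hF_nonneg (p : ℝ × ℝ) : 0 ≤ F p :=
    mul_nonneg (gaussianPDFReal_nonneg _ _ _) (gaussianPDFReal_nonneg _ _ _)
  have hF_int : Integrable F := by
    rw [Measure.volume_eq_prod]
    exact (integrable_gaussianPDFReal 0 1).mul_prod (integrable_gaussianPDFReal 0 1)
  have hdensity : ((gaussianReal 0 1).prod (gaussianReal 0 1)).real A = ∫ p, A.indicator F p := by
    rw [measureReal_def, gaussianReal_prod_eq_withDensity 0 0 one_ne_zero one_ne_zero,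
      withDensity_apply _ hA, integral_indicator hA]
    simp_rw [gaussianPDF, ← ENNReal.ofReal_mul (gaussianPDFReal_nonneg _ _ _)]
    rw [← ofReal_integral_eq_lintegral_ofReal hF_int.integrableOn (ae_of_all _ hF_nonneg),
      ENNReal.toReal_ofReal (setIntegral_nonneg hA fun p _ => hF_nonneg p)]
  have hpolar : ∀ p ∈ polarCoord.target,
      p.1 • A.indicator F (polarCoord.symm p) = G p.1 * T.indicator 1 p.2 := by
    rintro ⟨r, θ⟩ ⟨hr, -⟩
    have hF : F (polarCoord.symm (r, θ)) = (2 * π)⁻¹ * exp (-(r ^ 2 / 2)) := by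
      simp only [F, polarCoord_symm_apply, gaussianPDFReal_zero_one_mul]
      congr 3
      linear_combination (r ^ 2 / 2) * cos_sq_add_sin_sq θ
    dsimp only [G] at hr ⊢
    by_cases hRT : R < r ∧ θ ∈ T
    · rw [indicator_of_mem ((hAT r θ hr).2 hRT), hF, indicator_of_mem (mem_Ioi.2 hRT.1),
        indicator_of_mem hRT.2, Pi.one_apply, smul_eq_mul]
      ring
    · rw [indicator_of_notMem (mt (hAT r θ hr).1 hRT), smul_zero]
      rcases not_and_or.mp hRT with hr | hθ
      · simp [hr]
      · simp [hθ]
  have hradial : ∫ r in Ioi 0, G r = (2 * π)⁻¹ * exp (-(R ^ 2 / 2)) := by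
    rw [setIntegral_indicator measurableSet_Ioi, Ioi_inter_Ioi, max_eq_right hR,
      integral_const_mul, integral_Ioi_mul_exp_neg_sq_div_two]
  have hangular : ∫ θ in Ioo (-π) π, T.indicator 1 θ = volume.real (Ioo (-π) π ∩ T) := by
    rw [integral_indicator_one hT, measureReal_restrict_apply hT, inter_comm]
  rw [hdensity, ← integral_comp_polarCoord_symm,
    setIntegral_congr_fun polarCoord.open_target.measurableSet hpolar]
  rw [show polarCoord.target = Ioi (0 : ℝ) ×ˢ Ioo (-π) π from rfl, Measure.volume_eq_prod,
    setIntegral_prod_mul, hradial, hangular]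

lemma four_mul_arcsin_le_volume_sin_sq_le {c : ℝ} (hc₀ : 0 ≤ c) (hc₁ : c < 1) :
    4 * arcsin c ≤ volume.real (Ioo (-π) π ∩ {θ | sin θ ^ 2 ≤ c ^ 2}) := by
  set α := arcsin c
  have hα₀ : 0 ≤ α := arcsin_nonneg.mpr hc₀
  have hα₁ : α < π / 2 := arcsin_lt_pi_div_two.mpr hc₁
  have hsin : ∀ x ∈ Icc (-α) α, sin x ^ 2 ≤ c ^ 2 := by
    intro x hx
    have hsinα : sin α = c := sin_arcsin (by linarith) hc₁.le
    have hle := sin_le_sin_of_le_of_le_pi_div_two (by linarith [hx.1]) hα₁.le hx.2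
    have hge := sin_le_sin_of_le_of_le_pi_div_two (by linarith) (by linarith [hx.2]) hx.1
    rw [sin_neg, hsinα] at hge
    rw [hsinα] at hle
    exact sq_le_sq' hge hle
  have hsub : Ioc (-π) (-π + α) ∪ Icc (-α) α ∪ Ico (π - α) π
      ⊆ Ioo (-π) π ∩ {θ | sin θ ^ 2 ≤ c ^ 2} := by
    rintro θ ((⟨h₁, h₂⟩ | ⟨h₁, h₂⟩) | ⟨h₁, h₂⟩)
    · refine ⟨⟨h₁, by linarith⟩, ?_⟩
      have := hsin (θ + π) ⟨by linarith, by linarith⟩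
      rwa [sin_add_pi, neg_sq] at this
    · exact ⟨⟨by linarith, by linarith⟩, hsin θ ⟨h₁, h₂⟩⟩
    · refine ⟨⟨by linarith, h₂⟩, ?_⟩
      have := hsin (π - θ) ⟨by linarith, by linarith⟩
      rwa [sin_pi_sub] at this
  have hdisj₁ : Disjoint (Ioc (-π) (-π + α)) (Icc (-α) α) :=
    Set.disjoint_left.mpr fun x hx hx' => by linarith [hx.2, hx'.1]
  have hdisj₂ : Disjoint (Ioc (-π) (-π + α) ∪ Icc (-α) α) (Ico (π - α) π) :=
    Set.disjoint_left.mpr fun x hx hx' => by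
      rcases hx with hx | hx <;> linarith [hx.2, hx'.1]
  have hvol : volume (Ioc (-π) (-π + α) ∪ Icc (-α) α ∪ Ico (π - α) π)
      = ENNReal.ofReal (4 * α) := by
    rw [measure_union hdisj₂ measurableSet_Ico, measure_union hdisj₁ measurableSet_Icc,
      volume_Ioc, volume_Icc, volume_Ico, ← ENNReal.ofReal_add (by linarith) (by linarith),
      ← ENNReal.ofReal_add (by linarith) (by linarith)]
    ring_nf
  have hfin : volume (Ioo (-π) π ∩ {θ | sin θ ^ 2 ≤ c ^ 2}) ≠ ⊤ :=
    measure_ne_top_of_subset inter_subset_left measure_Ioo_lt_top.ne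
  calc 4 * α = (ENNReal.ofReal (4 * α)).toReal := (ENNReal.toReal_ofReal (by positivity)).symm
    _ ≤ _ := ENNReal.toReal_mono hfin (hvol ▸ measure_mono hsub)

-- The points outside the disc of radius `R` whose polar angle satisfies `|sin θ| ≤ c`.
def outerSector (R c : ℝ) : Set (ℝ × ℝ) :=
  {p | R ^ 2 < p.1 ^ 2 + p.2 ^ 2 ∧ p.2 ^ 2 ≤ c ^ 2 * (p.1 ^ 2 + p.2 ^ 2)}

lemma measurableSet_outerSector (R c : ℝ) : MeasurableSet (outerSector R c) := by
  simp only [outerSector, ofPred_and]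
  exact (measurableSet_lt (by fun_prop) (by fun_prop)).inter
    (measurableSet_le (by fun_prop) (by fun_prop))

lemma polarCoord_symm_mem_outerSector_iff {R c r : ℝ} (θ : ℝ) (hR : 0 ≤ R) (hr : 0 < r) :
    polarCoord.symm (r, θ) ∈ outerSector R c ↔ R < r ∧ sin θ ^ 2 ≤ c ^ 2 := by
  have hnorm : (r * cos θ) ^ 2 + (r * sin θ) ^ 2 = r ^ 2 := by
    linear_combination r ^ 2 * cos_sq_add_sin_sq θ
  change R ^ 2 < _ ∧ _ ≤ c ^ 2 * _ ↔ _
  rw [polarCoord_symm_apply, hnorm, mul_pow, mul_comm (c ^ 2), sq_lt_sq₀ hR hr.le,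
    mul_le_mul_iff_of_pos_left (by positivity)]

lemma gaussianReal_prod_outerSector_ge {R c : ℝ} (hR : 0 ≤ R) (hc₀ : 0 ≤ c) (hc₁ : c < 1) :
    2 / π * arcsin c * exp (-(R ^ 2 / 2))
      ≤ ((gaussianReal 0 1).prod (gaussianReal 0 1)).real (outerSector R c) := by
  rw [gaussianReal_prod_real_of_polar (measurableSet_outerSector R c) hR
    (T := {θ | sin θ ^ 2 ≤ c ^ 2}) (measurableSet_le (by fun_prop) measurable_const)
    (fun r θ hr => polarCoord_symm_mem_outerSector_iff θ hR hr)]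
  calc 2 / π * arcsin c * exp (-(R ^ 2 / 2))
      = (2 * π)⁻¹ * exp (-(R ^ 2 / 2)) * (4 * arcsin c) := by field_simp; ring
    _ ≤ _ := by gcongr; exact four_mul_arcsin_le_volume_sin_sq_le hc₀ hc₁

lemma lt_of_mem_outerSector {a t : ℝ} (ha : 0 < a) (ht : 0 ≤ t) {p : ℝ × ℝ}
    (hp : p ∈ outerSector (√(2 * t / a)) (√(a / 2))) :
    t < a * p.1 ^ 2 - (1 - a) * p.2 ^ 2 := by
  obtain ⟨hR, hc⟩ := hp
  rw [sq_sqrt (by positivity)] at hR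
  rw [sq_sqrt (by positivity)] at hc
  have : t < a / 2 * (p.1 ^ 2 + p.2 ^ 2) :=
    calc t = a / 2 * (2 * t / a) := by field_simp
      _ < _ := by gcongr
  nlinarith

/-- Tail lower bound for the product of two jointly Gaussian variables with zero mean,
unit variances and correlation `ρ`: for all `t > 0`,
`ℙ(g₁ g₂ > t) ≥ (2/π) arccos(√(3-ρ)/2) exp(-2t/(1+ρ))`.
The jointly Gaussian pair is represented via two independent standard normals `w₁, w₂` as
`g₁ = √((1+ρ)/2) w₁ + √((1-ρ)/2) w₂`, `g₂ = √((1+ρ)/2) w₁ - √((1-ρ)/2) w₂`. -/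
theorem stmt6 {Ω : Type*} [MeasurableSpace Ω] (μ : Measure Ω) [IsProbabilityMeasure μ]
    (w₁ w₂ : Ω → ℝ) (hw₁ : Measurable w₁) (hw₂ : Measurable w₂)
    (hindep : IndepFun w₁ w₂ μ)
    (hg₁ : Measure.map w₁ μ = gaussianReal 0 1)
    (hg₂ : Measure.map w₂ μ = gaussianReal 0 1)
    (ρ : ℝ) (hρ : ρ ∈ Set.Icc (-1 : ℝ) 1)
    (g₁ g₂ : Ω → ℝ)
    (hgdef₁ : g₁ = fun ω => Real.sqrt ((1 + ρ) / 2) * w₁ ω + Real.sqrt ((1 - ρ) / 2) * w₂ ω)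
    (hgdef₂ : g₂ = fun ω => Real.sqrt ((1 + ρ) / 2) * w₁ ω - Real.sqrt ((1 - ρ) / 2) * w₂ ω) :
    ∀ t : ℝ, 0 < t →
      (μ {ω | g₁ ω * g₂ ω > t}).toReal
        ≥ 2 / Real.pi * Real.arccos (Real.sqrt (3 - ρ) / 2)
          * Real.exp (-(2 * t) / (1 + ρ)) := by
  intro t ht
  obtain ⟨hρ₀, hρ₁⟩ := hρ
  obtain rfl | hρ_gt := hρ₀.eq_or_lt
  · norm_num [show √4 = 2 by rw [show (4 : ℝ) = 2 ^ 2 by norm_num, sqrt_sq zero_le_two]]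
  set a := (1 + ρ) / 2 with ha_def
  have ha : 0 < a := by linarith
  have hprod (ω : Ω) : g₁ ω * g₂ ω = a * w₁ ω ^ 2 - (1 - a) * w₂ ω ^ 2 := by
    rw [hgdef₁, hgdef₂]
    linear_combination w₁ ω ^ 2 * sq_sqrt ha.le - w₂ ω ^ 2 * sq_sqrt (by linarith : 0 ≤ (1 - ρ) / 2)
  have hc : √(a / 2) < 1 := by
    rw [sqrt_lt' one_pos]; linarith
  have harccos : arccos (√(3 - ρ) / 2) = arcsin √(a / 2) := by
    rw [arccos_eq_arcsin (by positivity), div_pow, sq_sqrt (by linarith)]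
    congr 2; ring
  have hexp : -(2 * t) / (1 + ρ) = -(√(2 * t / a) ^ 2 / 2) := by
    rw [sq_sqrt (by positivity), ha_def]; field_simp
  show _ ≤ μ.real _
  calc 2 / π * arccos (√(3 - ρ) / 2) * exp (-(2 * t) / (1 + ρ))
      = 2 / π * arcsin √(a / 2) * exp (-(√(2 * t / a) ^ 2 / 2)) := by rw [harccos, hexp]
    _ ≤ ((gaussianReal 0 1).prod (gaussianReal 0 1)).real (outerSector √(2 * t / a) √(a / 2)) :=
      gaussianReal_prod_outerSector_ge (sqrt_nonneg _) (sqrt_nonneg _) hc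
    _ = μ.real ((fun ω => (w₁ ω, w₂ ω)) ⁻¹' outerSector √(2 * t / a) √(a / 2)) := by
      rw [measureReal_def, measureReal_def, IndepFun.measure_preimage_prodMk hw₁ hw₂ hindep
        (measurableSet_outerSector _ _), hg₁, hg₂]
    _ ≤ μ.real {ω | g₁ ω * g₂ ω > t} := measureReal_mono fun ω hω => by
      simpa only [mem_ofPred_eq, hprod] using lt_of_mem_outerSector ha ht.le hω
end

section
/- Let $X_\sharp \in \mathbb{R}^{d_1 \times d_2}$ have rank $r$ with compact SVD $X_\sharp = U_\sharp \Sigma_\sharp V_\sharp^\top$, and let $\hat V \in \mathbb{R}^{d_2 \times r}$ satisfy $\hat V^\top \hat V = I_r$ and $\|(I_{d_2} - \hat V \hat V^\top) V_\sharp V_\sharp^\top\| \le \delta$ for some $\delta < 1$ (spectral norm). Then the $r$-th largest singular value satisfies $\sigma_r(X_\sharp \hat V \hat V^\top X_\sharp^\top) \ge (1 - \delta)\,\sigma_r(X_\sharp)^2$; in particular $X_\sharp \hat V \hat V^\top X_\sharp^\top$ has rank exactly $r$ and its column space equals that of $U_\sharp$. -/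
/-- The spectral (ℓ₂ operator) norm of a real matrix. -/
noncomputable def specNorm {m n : ℕ} (A : Matrix (Fin m) (Fin n) ℝ) : ℝ :=
  ‖(Matrix.toEuclideanLin A).toContinuousLinearMap‖

/-- The `k`-th largest singular value of a real matrix, via the Courant–Fischer
max-min characterization: `σ_k(A) = sup_{dim S = k} inf_{x ∈ S, ‖x‖=1} ‖A x‖`. -/
noncomputable def singVal {m n : ℕ} (A : Matrix (Fin m) (Fin n) ℝ) (k : ℕ) : ℝ :=
  ⨆ S : {S : Submodule ℝ (EuclideanSpace ℝ (Fin n)) // Module.finrank ℝ S = k},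
    ⨅ x : {x : EuclideanSpace ℝ (Fin n) // x ∈ S.1 ∧ ‖x‖ = 1},
      ‖Matrix.toEuclideanLin A x.1‖

/-!
Write `A = X V̂ V̂ᵀ Xᵀ`. For `x = U c` one has `⟪x, A x⟫ = ‖V̂ᵀ V Σ c‖²`. Since `V̂ V̂ᵀ` is the
orthogonal projection onto the columns of `V̂`, Pythagoras and the hypothesis give
`‖V̂ᵀ y‖² ≥ (1 - δ) ‖y‖²` for every `y` in the column space of `V`. As `σ_r(X) ≤ |s_j|` for
every `j`, this yields `‖A x‖ ≥ (1 - δ) ‖Σ c‖² ≥ (1 - δ) σ_r(X)²` on the unit sphere of the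
`r`-dimensional column space of `U`, and Courant–Fischer turns this into the bound on `σ_r(A)`.
The same estimate shows that `A U` is injective; as the range of `A` lies in that of `U`, the two
ranges coincide and have dimension `r`.
-/

open Matrix Module
open scoped RealInnerProductSpace

section EuclideanMatrix

variable {m n p : ℕ}

lemma toEuclideanLin_mul_apply (A : Matrix (Fin m) (Fin n) ℝ) (B : Matrix (Fin n) (Fin p) ℝ)
    (x : EuclideanSpace ℝ (Fin p)) :
    toEuclideanLin (A * B) x = toEuclideanLin A (toEuclideanLin B x) := by
  simp

lemma inner_toEuclideanLin_left (A : Matrix (Fin m) (Fin n) ℝ) (x : EuclideanSpace ℝ (Fin n))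
    (y : EuclideanSpace ℝ (Fin m)) :
    ⟪toEuclideanLin A x, y⟫ = ⟪x, toEuclideanLin Aᵀ y⟫ := by
  rw [← conjTranspose_eq_transpose_of_trivial, toEuclideanLin_conjTranspose_eq_adjoint,
    LinearMap.adjoint_inner_right]

lemma inner_toEuclideanLin_mul_transpose_self (B : Matrix (Fin m) (Fin n) ℝ)
    (x : EuclideanSpace ℝ (Fin m)) :
    ⟪x, toEuclideanLin (B * Bᵀ) x⟫ = ‖toEuclideanLin Bᵀ x‖ ^ 2 := by
  rw [toEuclideanLin_mul_apply, real_inner_comm, inner_toEuclideanLin_left,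
    real_inner_self_eq_norm_sq]

lemma norm_toEuclideanLin_of_transpose_mul_self (W : Matrix (Fin m) (Fin n) ℝ)
    (hW : Wᵀ * W = 1) (c : EuclideanSpace ℝ (Fin n)) :
    ‖toEuclideanLin W c‖ = ‖c‖ := by
  have h : ‖toEuclideanLin W c‖ ^ 2 = ‖c‖ ^ 2 := by
    rw [← real_inner_self_eq_norm_sq, inner_toEuclideanLin_left, ← toEuclideanLin_mul_apply, hW,
      toLpLin_one, LinearMap.id_apply, real_inner_self_eq_norm_sq]
  exact (sq_eq_sq₀ (norm_nonneg _) (norm_nonneg _)).mp h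

lemma norm_sq_toEuclideanLin_transpose_add_norm_sq_sub (W : Matrix (Fin m) (Fin n) ℝ)
    (hW : Wᵀ * W = 1) (y : EuclideanSpace ℝ (Fin m)) :
    ‖toEuclideanLin Wᵀ y‖ ^ 2 + ‖y - toEuclideanLin (W * Wᵀ) y‖ ^ 2 = ‖y‖ ^ 2 := by
  set z := toEuclideanLin Wᵀ y
  have hPy : toEuclideanLin (W * Wᵀ) y = toEuclideanLin W z := toEuclideanLin_mul_apply _ _ _
  have horth : ⟪toEuclideanLin W z, y - toEuclideanLin W z⟫ = 0 := by
    rw [inner_sub_right, inner_toEuclideanLin_left, real_inner_self_eq_norm_sq,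
      real_inner_self_eq_norm_sq, norm_toEuclideanLin_of_transpose_mul_self W hW, sub_self]
  have h := norm_add_sq_real (toEuclideanLin W z) (y - toEuclideanLin W z)
  rw [add_sub_cancel, horth] at h
  rw [hPy, ← norm_toEuclideanLin_of_transpose_mul_self W hW z, h]
  ring

lemma norm_toEuclideanLin_transpose_le (W : Matrix (Fin m) (Fin n) ℝ) (hW : Wᵀ * W = 1)
    (y : EuclideanSpace ℝ (Fin m)) :
    ‖toEuclideanLin Wᵀ y‖ ≤ ‖y‖ := by
  have := norm_sq_toEuclideanLin_transpose_add_norm_sq_sub W hW y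
  exact pow_le_pow_iff_left₀ (norm_nonneg _) (norm_nonneg _) two_ne_zero |>.mp
    (by nlinarith [sq_nonneg ‖y - toEuclideanLin (W * Wᵀ) y‖])

lemma norm_toEuclideanLin_le_specNorm (A : Matrix (Fin m) (Fin n) ℝ)
    (x : EuclideanSpace ℝ (Fin n)) :
    ‖toEuclideanLin A x‖ ≤ specNorm A * ‖x‖ :=
  (toEuclideanLin A).toContinuousLinearMap.le_opNorm x

lemma finrank_range_toEuclideanLin_of_transpose_mul_self (W : Matrix (Fin m) (Fin n) ℝ)
    (hW : Wᵀ * W = 1) :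
    finrank ℝ (LinearMap.range (toEuclideanLin W)) = n := by
  refine (LinearMap.finrank_range_of_inj (Function.LeftInverse.injective
    (g := toEuclideanLin Wᵀ) fun c => ?_)).trans finrank_euclideanSpace_fin
  rw [← toEuclideanLin_mul_apply, hW, toLpLin_one, LinearMap.id_apply]

end EuclideanMatrix

/-- For `y = V c`, the residual `e = y - V̂ V̂ᵀ y` satisfies both `‖e‖ ≤ δ ‖y‖` and `‖e‖ ≤ ‖y‖`
(Pythagoras), hence `‖e‖² ≤ δ ‖y‖²`. -/
lemma sub_mul_norm_sq_le_norm_sq_toEuclideanLin_transpose_mul {d r k : ℕ}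
    (V : Matrix (Fin d) (Fin r) ℝ) (Vh : Matrix (Fin d) (Fin k) ℝ)
    (hV : Vᵀ * V = 1) (hVh : Vhᵀ * Vh = 1) {δ : ℝ}
    (hclose : specNorm ((1 - Vh * Vhᵀ) * (V * Vᵀ)) ≤ δ) (c : EuclideanSpace ℝ (Fin r)) :
    (1 - δ) * ‖c‖ ^ 2 ≤ ‖toEuclideanLin (Vhᵀ * V) c‖ ^ 2 := by
  set y := toEuclideanLin V c
  have hy : ‖y‖ = ‖c‖ := norm_toEuclideanLin_of_transpose_mul_self V hV c
  have hfix : toEuclideanLin (V * Vᵀ) y = y := by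
    rw [← toEuclideanLin_mul_apply, Matrix.mul_assoc, hV, Matrix.mul_one]
  have hres : toEuclideanLin ((1 - Vh * Vhᵀ) * (V * Vᵀ)) y = y - toEuclideanLin (Vh * Vhᵀ) y := by
    rw [toEuclideanLin_mul_apply, hfix, map_sub, LinearMap.sub_apply, toLpLin_one,
      LinearMap.id_apply]
  have hres_le_δ : ‖y - toEuclideanLin (Vh * Vhᵀ) y‖ ≤ δ * ‖c‖ := by
    rw [← hres, ← hy]
    exact (norm_toEuclideanLin_le_specNorm _ y).trans (by gcongr)
  have hpyth := norm_sq_toEuclideanLin_transpose_add_norm_sq_sub Vh hVh y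
  have hres_le : ‖y - toEuclideanLin (Vh * Vhᵀ) y‖ ≤ ‖c‖ := by
    rw [← hy]
    nlinarith [norm_nonneg (y - toEuclideanLin (Vh * Vhᵀ) y), norm_nonneg y,
      sq_nonneg ‖toEuclideanLin Vhᵀ y‖]
  rw [toEuclideanLin_mul_apply]
  change (1 - δ) * ‖c‖ ^ 2 ≤ ‖toEuclideanLin Vhᵀ y‖ ^ 2
  rw [hy] at hpyth
  nlinarith [mul_le_mul hres_le_δ hres_le (norm_nonneg _) ((norm_nonneg _).trans hres_le_δ)]

section SingularValues

variable {m n : ℕ}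

lemma singVal_nonneg (A : Matrix (Fin m) (Fin n) ℝ) (k : ℕ) : 0 ≤ singVal A k :=
  Real.iSup_nonneg fun _ => Real.iInf_nonneg fun _ => norm_nonneg _

lemma singVal_zero (A : Matrix (Fin m) (Fin n) ℝ) : singVal A 0 = 0 := by
  refine le_antisymm (Real.iSup_le (fun S => ?_) le_rfl) (singVal_nonneg A 0)
  have : IsEmpty {x : EuclideanSpace ℝ (Fin n) // x ∈ S.1 ∧ ‖x‖ = 1} := by
    refine ⟨fun ⟨x, hxS, hx⟩ => ?_⟩
    rw [Submodule.finrank_eq_zero.mp S.2, Submodule.mem_bot] at hxS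
    simp [hxS] at hx
  exact (Real.iInf_of_isEmpty _).le

lemma iInf_norm_toEuclideanLin_le (A : Matrix (Fin m) (Fin n) ℝ)
    {S : Submodule ℝ (EuclideanSpace ℝ (Fin n))} {x : EuclideanSpace ℝ (Fin n)} (hxS : x ∈ S)
    (hx : ‖x‖ = 1) :
    ⨅ y : {y : EuclideanSpace ℝ (Fin n) // y ∈ S ∧ ‖y‖ = 1}, ‖toEuclideanLin A y.1‖
      ≤ ‖toEuclideanLin A x‖ := by
  have hbdd : BddBelow (Set.range fun y : {y : EuclideanSpace ℝ (Fin n) // y ∈ S ∧ ‖y‖ = 1} =>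
      ‖toEuclideanLin A y.1‖) := ⟨0, by rintro _ ⟨_, rfl⟩; exact norm_nonneg _⟩
  exact ciInf_le hbdd ⟨x, hxS, hx⟩

lemma le_singVal_of_forall_le_norm (A : Matrix (Fin m) (Fin n) ℝ)
    (S : Submodule ℝ (EuclideanSpace ℝ (Fin n))) {k : ℕ} (hS : finrank ℝ S = k) (hk : 0 < k)
    {c : ℝ} (h : ∀ x ∈ S, ‖x‖ = 1 → c ≤ ‖toEuclideanLin A x‖) :
    c ≤ singVal A k := by
  have hbdd : BddAbove (Set.range fun S : {S : Submodule ℝ (EuclideanSpace ℝ (Fin n)) //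
      finrank ℝ S = k} =>
      ⨅ x : {x : EuclideanSpace ℝ (Fin n) // x ∈ S.1 ∧ ‖x‖ = 1}, ‖toEuclideanLin A x.1‖) := by
    refine ⟨specNorm A, Set.forall_mem_range.mpr fun T => ?_⟩
    rcases isEmpty_or_nonempty {x : EuclideanSpace ℝ (Fin n) // x ∈ T.1 ∧ ‖x‖ = 1}
      with _ | ⟨⟨x, hxT, hx⟩⟩
    · exact (Real.iInf_of_isEmpty _).trans_le (norm_nonneg _)
    · refine (iInf_norm_toEuclideanLin_le A hxT hx).trans ?_
      simpa [hx] using norm_toEuclideanLin_le_specNorm A x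
  have : Nontrivial S := Module.finrank_pos_iff.mp (hS ▸ hk)
  obtain ⟨x, hx⟩ := exists_ne (0 : S)
  have hunit : Nonempty {x : EuclideanSpace ℝ (Fin n) // x ∈ S ∧ ‖x‖ = 1} :=
    ⟨⟨‖(x : EuclideanSpace ℝ (Fin n))‖⁻¹ • (x : EuclideanSpace ℝ (Fin n)),
      S.smul_mem _ x.2, norm_smul_inv_norm (by simpa using hx)⟩⟩
  unfold singVal
  refine le_trans ?_ (le_ciSup hbdd ⟨S, hS⟩)
  exact le_ciInf fun x => h x.1 x.2.1 x.2.2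

lemma singVal_le_of_forall_norm_le (A : Matrix (Fin m) (Fin n) ℝ)
    (W : Submodule ℝ (EuclideanSpace ℝ (Fin n))) {k : ℕ} (hk : n < k + finrank ℝ W) {c : ℝ}
    (hc : 0 ≤ c) (h : ∀ x ∈ W, ‖toEuclideanLin A x‖ ≤ c * ‖x‖) :
    singVal A k ≤ c := by
  refine Real.iSup_le (fun ⟨S, hS⟩ => ?_) hc
  -- by the dimension count `hk`, every `k`-dimensional subspace meets `W` nontrivially
  have hmeet : 0 < finrank ℝ ↥(S ⊓ W) := by
    have := Submodule.finrank_sup_add_finrank_inf_eq S W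
    have := (S ⊔ W).finrank_le
    rw [finrank_euclideanSpace_fin] at this
    omega
  have : Nontrivial ↥(S ⊓ W) := Module.finrank_pos_iff.mp hmeet
  obtain ⟨⟨x, hxS, hxW⟩, hx⟩ := exists_ne (0 : ↥(S ⊓ W))
  have hx : x ≠ 0 := by rintro rfl; exact hx rfl
  have hunit : ‖‖x‖⁻¹ • x‖ = 1 := norm_smul_inv_norm hx
  refine (iInf_norm_toEuclideanLin_le A (S.smul_mem _ hxS) hunit).trans ?_
  simpa [hunit] using h _ (W.smul_mem ‖x‖⁻¹ hxW)

end SingularValues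

lemma toEuclideanLin_diagonal_of_forall_ne {r : ℕ} (s : Fin r → ℝ) {w : EuclideanSpace ℝ (Fin r)}
    {j : Fin r} (hw : ∀ i ≠ j, w i = 0) :
    toEuclideanLin (diagonal s) w = s j • w := by
  ext i
  by_cases hi : i = j
  · subst hi
    simp [toLpLin_apply, mulVec_diagonal]
  · simp [toLpLin_apply, mulVec_diagonal, hw i hi]

lemma mul_norm_le_norm_toEuclideanLin_diagonal {r : ℕ} (s : Fin r → ℝ) {a : ℝ} (ha : 0 ≤ a)
    (h : ∀ i, a ≤ |s i|) (c : EuclideanSpace ℝ (Fin r)) :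
    a * ‖c‖ ≤ ‖toEuclideanLin (diagonal s) c‖ := by
  rw [EuclideanSpace.norm_eq, EuclideanSpace.norm_eq, ← Real.sqrt_sq ha,
    ← Real.sqrt_mul (sq_nonneg a), Finset.mul_sum]
  gcongr with i
  simp only [toLpLin_apply, mulVec_diagonal, PiLp.toLp_apply, norm_mul, Real.norm_eq_abs, mul_pow]
  gcongr
  exact h i

section SVD

variable {d₁ d₂ r : ℕ} {X : Matrix (Fin d₁) (Fin d₂) ℝ} {U : Matrix (Fin d₁) (Fin r) ℝ}
  {s : Fin r → ℝ} {V : Matrix (Fin d₂) (Fin r) ℝ}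

/-- Test on the orthogonal complement of the right singular vectors other than the `j`-th. -/
lemma singVal_le_abs_of_eq_mul_diagonal_mul_transpose (hX : X = U * diagonal s * Vᵀ)
    (hU : Uᵀ * U = 1) (hV : Vᵀ * V = 1) (j : Fin r) :
    singVal X r ≤ |s j| := by
  set K := Submodule.span ℝ
    (Set.range fun i : {i // i ≠ j} => toEuclideanLin V (EuclideanSpace.single i.1 1))
  have hK : finrank ℝ K < r := by
    refine (finrank_range_le_card _).trans_lt ?_
    simp only [Fintype.card_subtype_compl, Fintype.card_fin, Fintype.card_unique]
    exact Nat.sub_one_lt_of_lt j.pos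
  refine singVal_le_of_forall_norm_le X Kᗮ ?_ (abs_nonneg _) fun x hx => ?_
  · have := K.finrank_add_finrank_orthogonal
    rw [finrank_euclideanSpace_fin] at this
    omega
  set w := toEuclideanLin Vᵀ x
  have hw : ∀ i ≠ j, w i = 0 := fun i hi => by
    have := (K.mem_orthogonal x).mp hx _ (Submodule.subset_span ⟨⟨i, hi⟩, rfl⟩)
    rwa [inner_toEuclideanLin_left, EuclideanSpace.inner_single_left, map_one, one_mul] at this
  calc ‖toEuclideanLin X x‖ = ‖toEuclideanLin (diagonal s) w‖ := by
        rw [hX, toEuclideanLin_mul_apply, toEuclideanLin_mul_apply,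
          norm_toEuclideanLin_of_transpose_mul_self U hU]
    _ = |s j| * ‖w‖ := by
        rw [toEuclideanLin_diagonal_of_forall_ne s hw, norm_smul, Real.norm_eq_abs]
    _ ≤ |s j| * ‖x‖ := by
        gcongr
        exact norm_toEuclideanLin_transpose_le V hV x

lemma sub_mul_norm_sq_le_inner_of_eq_mul_diagonal_mul_transpose (hX : X = U * diagonal s * Vᵀ)
    (hU : Uᵀ * U = 1) (hV : Vᵀ * V = 1) {k : ℕ} {Vh : Matrix (Fin d₂) (Fin k) ℝ}
    (hVh : Vhᵀ * Vh = 1) {δ : ℝ} (hclose : specNorm ((1 - Vh * Vhᵀ) * (V * Vᵀ)) ≤ δ)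
    (c : EuclideanSpace ℝ (Fin r)) :
    (1 - δ) * ‖toEuclideanLin (diagonal s) c‖ ^ 2
      ≤ ⟪toEuclideanLin U c, toEuclideanLin (X * Vh * Vhᵀ * Xᵀ) (toEuclideanLin U c)⟫ := by
  have hXU : (X * Vh)ᵀ * U = Vhᵀ * V * diagonal s := by
    simp [hX, Matrix.transpose_mul, Matrix.mul_assoc, hU]
  rw [show X * Vh * Vhᵀ * Xᵀ = X * Vh * (X * Vh)ᵀ by rw [transpose_mul, Matrix.mul_assoc],
    inner_toEuclideanLin_mul_transpose_self, ← toEuclideanLin_mul_apply, hXU,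
    toEuclideanLin_mul_apply]
  exact sub_mul_norm_sq_le_norm_sq_toEuclideanLin_transpose_mul V Vh hV hVh hclose _

lemma sub_mul_sq_singVal_le_singVal_mul_mul_transpose (hX : X = U * diagonal s * Vᵀ)
    (hU : Uᵀ * U = 1) (hV : Vᵀ * V = 1) {k : ℕ} {Vh : Matrix (Fin d₂) (Fin k) ℝ}
    (hVh : Vhᵀ * Vh = 1) {δ : ℝ} (hδ : δ ≤ 1)
    (hclose : specNorm ((1 - Vh * Vhᵀ) * (V * Vᵀ)) ≤ δ) :
    (1 - δ) * singVal X r ^ 2 ≤ singVal (X * Vh * Vhᵀ * Xᵀ) r := by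
  rcases Nat.eq_zero_or_pos r with rfl | hr
  · simp [singVal_zero]
  have hUisom := norm_toEuclideanLin_of_transpose_mul_self U hU
  refine le_singVal_of_forall_le_norm _ _
    (finrank_range_toEuclideanLin_of_transpose_mul_self U hU) hr ?_
  rintro _ ⟨c, rfl⟩ hc
  rw [hUisom] at hc
  have hσ := mul_norm_le_norm_toEuclideanLin_diagonal s (singVal_nonneg X r)
    (singVal_le_abs_of_eq_mul_diagonal_mul_transpose hX hU hV) c
  rw [hc, mul_one] at hσ
  calc (1 - δ) * singVal X r ^ 2 ≤ (1 - δ) * ‖toEuclideanLin (diagonal s) c‖ ^ 2 :=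
        mul_le_mul_of_nonneg_left (pow_le_pow_left₀ (singVal_nonneg X r) hσ 2) (by linarith)
    _ ≤ ⟪toEuclideanLin U c, toEuclideanLin (X * Vh * Vhᵀ * Xᵀ) (toEuclideanLin U c)⟫ :=
        sub_mul_norm_sq_le_inner_of_eq_mul_diagonal_mul_transpose hX hU hV hVh hclose c
    _ ≤ ‖toEuclideanLin (X * Vh * Vhᵀ * Xᵀ) (toEuclideanLin U c)‖ := by
        simpa [hUisom, hc] using real_inner_le_norm (toEuclideanLin U c) _

lemma injective_toLin'_mul_of_eq_mul_diagonal_mul_transpose (hX : X = U * diagonal s * Vᵀ)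
    (hU : Uᵀ * U = 1) (hV : Vᵀ * V = 1) (hs : ∀ i, s i ≠ 0) {k : ℕ}
    {Vh : Matrix (Fin d₂) (Fin k) ℝ} (hVh : Vhᵀ * Vh = 1) {δ : ℝ} (hδ : δ < 1)
    (hclose : specNorm ((1 - Vh * Vhᵀ) * (V * Vᵀ)) ≤ δ) :
    Function.Injective (toLin' (X * Vh * Vhᵀ * Xᵀ * U)) := by
  rw [← LinearMap.ker_eq_bot, LinearMap.ker_eq_bot']
  intro c hc
  have hquad := sub_mul_norm_sq_le_inner_of_eq_mul_diagonal_mul_transpose hX hU hV hVh hclose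
    (WithLp.toLp 2 c)
  have hAUc : toEuclideanLin (X * Vh * Vhᵀ * Xᵀ * U) (WithLp.toLp 2 c) = 0 := by
    rw [toLpLin_toLp, hc, WithLp.toLp_zero]
  rw [← toEuclideanLin_mul_apply, hAUc, inner_zero_right] at hquad
  have hDc : toEuclideanLin (diagonal s) (WithLp.toLp 2 c) = 0 := by
    have : ‖toEuclideanLin (diagonal s) (WithLp.toLp 2 c)‖ ^ 2 ≤ 0 :=
      nonpos_of_mul_nonpos_right hquad (by linarith)
    exact norm_eq_zero.mp (pow_eq_zero_iff two_ne_zero |>.mp (le_antisymm this (sq_nonneg _)))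
  ext i
  have hi := congrArg (· i) hDc
  simp only [toLpLin_toLp, toLin'_apply, mulVec_diagonal, PiLp.toLp_apply, PiLp.zero_apply] at hi
  exact (mul_eq_zero.mp hi).resolve_left (hs i)

end SVD

lemma rank_eq_and_range_toLin'_eq_of_injective {K ι κ : Type*} [Field K] [Fintype ι]
    [DecidableEq ι] [Fintype κ] [DecidableEq κ] {A : Matrix ι ι K} {U : Matrix ι κ K}
    {B : Matrix κ ι K} (hA : A = U * B) (hinj : Function.Injective (toLin' (A * U))) :
    A.rank = Fintype.card κ ∧ LinearMap.range (toLin' A) = LinearMap.range (toLin' U) := by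
  have hAU : LinearMap.range (toLin' A) ≤ LinearMap.range (toLin' U) := by
    rw [hA, toLin'_mul]
    exact LinearMap.range_comp_le_range _ _
  have hrange : LinearMap.range (toLin' (A * U)) ≤ LinearMap.range (toLin' A) := by
    rw [toLin'_mul]
    exact LinearMap.range_comp_le_range _ _
  have h₁ := LinearMap.finrank_range_of_inj hinj
  have h₂ := (toLin' U).finrank_range_le
  have h₃ := Submodule.finrank_mono hrange
  have h₄ := Submodule.finrank_mono hAU
  rw [finrank_fintype_fun_eq_card] at h₁ h₂
  have heq := Submodule.eq_of_le_of_finrank_eq hAU (by omega)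
  refine ⟨?_, heq⟩
  rw [Matrix.rank, ← toLin'_apply']
  omega

/-- If `X♯ = U♯ Σ♯ V♯ᵀ` is a compact SVD of a rank-`r` matrix and `V̂` has orthonormal
columns with `‖(I - V̂V̂ᵀ) V♯V♯ᵀ‖ ≤ δ < 1`, then
`σ_r(X♯ V̂ V̂ᵀ X♯ᵀ) ≥ (1-δ) σ_r(X♯)²`; in particular `X♯ V̂ V̂ᵀ X♯ᵀ` has rank exactly `r`
and its column space equals that of `U♯`. -/
theorem stmt12 (d₁ d₂ r : ℕ)
    (X : Matrix (Fin d₁) (Fin d₂) ℝ)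
    (U : Matrix (Fin d₁) (Fin r) ℝ) (s : Fin r → ℝ) (V : Matrix (Fin d₂) (Fin r) ℝ)
    (hX : X = U * Matrix.diagonal s * V.transpose)
    (hU : U.transpose * U = 1) (hVc : V.transpose * V = 1)
    (hs : ∀ k, 0 < s k)
    (Vh : Matrix (Fin d₂) (Fin r) ℝ) (hVh : Vh.transpose * Vh = 1)
    (δ : ℝ) (hδ : δ < 1)
    (hclose : specNorm (((1 - Vh * Vh.transpose) * (V * V.transpose) :
      Matrix (Fin d₂) (Fin d₂) ℝ)) ≤ δ) :
    singVal (X * Vh * Vh.transpose * X.transpose) r ≥ (1 - δ) * singVal X r ^ 2 ∧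
    (X * Vh * Vh.transpose * X.transpose).rank = r ∧
    LinearMap.range (Matrix.toLin' (X * Vh * Vh.transpose * X.transpose))
      = LinearMap.range (Matrix.toLin' U) := by
  have hA : X * Vh * Vhᵀ * Xᵀ = U * (diagonal s * Vᵀ * Vh * Vhᵀ * Xᵀ) := by
    simp only [Matrix.mul_assoc, hX]
  have hinj := injective_toLin'_mul_of_eq_mul_diagonal_mul_transpose hX hU hVc
    (fun i => (hs i).ne') hVh hδ hclose
  exact ⟨sub_mul_sq_singVal_le_singVal_mul_mul_transpose hX hU hVc hVh hδ.le hclose,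
    by simpa using rank_eq_and_range_toLin'_eq_of_injective hA hinj⟩
end
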